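/- arXiv:1912.07196 — 2 statements merged into one kernel-verified Lean document; each statement's English description precedes it below -/
import Mathlib

section
/- Let k ≥ 1 and let B be a (k+1)×(k+1) complex Hermitian matrix of arrow form: B_{ii} = λ_i for 1 ≤ i ≤ k with λ_1,...,λ_k pairwise distinct reals, B_{ij} = 0 for i ≠ j with i, j ≤ k, B_{i,k+1} = a_i ∈ ℂ and B_{k+1,i} = conj(a_i) for i ≤ k, and B_{k+1,k+1} = c ∈ ℝ. Let μ_1,...,μ_{k+1} ∈ ℝ be the eigenvalues of B counted with multiplicity, i.e. det(X·Id − B) = ∏_{v=1}^{k+1}(X − μ_v), and let j be an index with μ_j ≠ λ_i for all i ∈ {1,...,k}. Then 1 + ∑_{i=1}^{k} |a_i|²/(μ_j − λ_i)² = (∏_{v≠j}(μ_j − μ_v)) / (∏_{i=1}^{k}(μ_j − λ_i)). -/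
open Matrix

noncomputable section

/-- The Hermitian arrow (bordered diagonal) matrix with leading diagonal block
`diag(λ_1,...,λ_k)`, border entries `a_i` (and their conjugates) and corner entry `c`. -/
def arrowMatrix (k : ℕ) (lam : Fin k → ℝ) (a : Fin k → ℂ) (c : ℝ) :
    Matrix (Fin (k + 1)) (Fin (k + 1)) ℂ :=
  Matrix.of fun i j =>
    if hi : i = Fin.last k then
      (if hj : j = Fin.last k then (c : ℂ) else (starRingEnd ℂ) (a (j.castPred hj)))
    else
      (if hj : j = Fin.last k then a (i.castPred hi)
       else if i = j then (lam (i.castPred hi) : ℂ) else 0)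

/-!
For `X` different from every `λᵢ`, the Schur complement of the diagonal block gives
`det (X - B) = ∏ᵢ (X - λᵢ) · s(X)` with the secular function `s(X) = X - c - ∑ᵢ |aᵢ|² / (X - λᵢ)`.
At `X = μ_j` the left side vanishes while `∏ᵢ (μ_j - λᵢ) ≠ 0`, so `s(μ_j) = 0`. Differentiating the
factorisation at `μ_j` therefore gives `∏_{v ≠ j} (μ_j - μ_v) = ∏ᵢ (μ_j - λᵢ) · s'(μ_j)`, and
`s'(μ_j) = 1 + ∑ᵢ |aᵢ|² / (μ_j - λᵢ)²`.
-/

open Finset Filter Topology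

theorem Matrix.det_fromBlocks_diagonal_replicateCol_replicateRow {K ι o : Type*} [Field K]
    [Fintype ι] [DecidableEq ι] [Fintype o] [DecidableEq o] [Unique o]
    (d u v : ι → K) (e : K) (hd : ∀ i, d i ≠ 0) :
    (fromBlocks (diagonal d) (replicateCol o u) (replicateRow o v) (of fun _ _ => e)).det =
      (∏ i, d i) * (e - ∑ i, v i * u i / d i) := by
  let : Invertible (diagonal d) :=
    ⟨diagonal d⁻¹, by simp [diagonal_mul_diagonal, hd], by simp [diagonal_mul_diagonal, hd]⟩
  rw [det_fromBlocks₁₁, show ⅟(diagonal d) = diagonal d⁻¹ from rfl, det_diagonal, det_unique]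
  simp [mul_apply, diagonal_apply, div_eq_mul_inv, mul_right_comm]

section arrowMatrix

variable {k : ℕ} (lam : Fin k → ℝ) (a : Fin k → ℂ) (c : ℝ)

@[simp]
theorem arrowMatrix_castSucc_castSucc (i j : Fin k) :
    arrowMatrix k lam a c i.castSucc j.castSucc = if i = j then (lam i : ℂ) else 0 := by
  simp [arrowMatrix, Fin.castSucc_ne_last]

@[simp]
theorem arrowMatrix_castSucc_last (i : Fin k) :
    arrowMatrix k lam a c i.castSucc (Fin.last k) = a i := by
  simp [arrowMatrix, Fin.castSucc_ne_last]

@[simp]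
theorem arrowMatrix_last_castSucc (j : Fin k) :
    arrowMatrix k lam a c (Fin.last k) j.castSucc = starRingEnd ℂ (a j) := by
  simp [arrowMatrix, Fin.castSucc_ne_last]

@[simp]
theorem arrowMatrix_last_last : arrowMatrix k lam a c (Fin.last k) (Fin.last k) = c := by
  simp [arrowMatrix]

theorem submatrix_smul_one_sub_arrowMatrix (X : ℂ) :
    (X • 1 - arrowMatrix k lam a c).submatrix finSumFinEquiv finSumFinEquiv =
      fromBlocks (diagonal fun i => X - lam i) (replicateCol (Fin 1) (-a))
        (replicateRow (Fin 1) fun i => -starRingEnd ℂ (a i)) (of fun _ _ => X - c) := by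
  have hinl (i : Fin k) : finSumFinEquiv (Sum.inl i) = i.castSucc := rfl
  have hinr (i : Fin 1) : finSumFinEquiv (Sum.inr i) = Fin.last k := by
    rw [Fin.fin_one_eq_zero i]; rfl
  ext (i | i) (j | j) <;> simp only [submatrix_apply, hinl, hinr]
  · by_cases h : i = j <;> simp [h, one_apply]
  · simp [one_apply, Fin.castSucc_ne_last]
  · simp [one_apply, (Fin.castSucc_ne_last _).symm]
  · simp

theorem det_smul_one_sub_arrowMatrix (X : ℂ) (hX : ∀ i, X ≠ lam i) :
    (X • 1 - arrowMatrix k lam a c).det =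
      (∏ i, (X - lam i)) * (X - c - ∑ i, Complex.normSq (a i) / (X - lam i)) := by
  rw [← det_submatrix_equiv_self finSumFinEquiv, submatrix_smul_one_sub_arrowMatrix,
    det_fromBlocks_diagonal_replicateCol_replicateRow _ _ _ _ fun i => sub_ne_zero.2 (hX i)]
  simp [Complex.normSq_eq_conj_mul_self]

end arrowMatrix

def secularFunction {ι : Type*} [Fintype ι] (lam w : ι → ℝ) (c y : ℝ) : ℝ :=
  y - c - ∑ i, w i / (y - lam i)

theorem hasDerivAt_secularFunction {ι : Type*} [Fintype ι] (lam w : ι → ℝ) (c : ℝ) {y : ℝ}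
    (hy : ∀ i, y ≠ lam i) :
    HasDerivAt (secularFunction lam w c) (1 + ∑ i, w i / (y - lam i) ^ 2) y := by
  have h (i : ι) : HasDerivAt (fun y => w i / (y - lam i)) (-(w i / (y - lam i) ^ 2)) y := by
    simpa [div_eq_mul_inv] using
      (((hasDerivAt_id y).sub_const (lam i)).inv (sub_ne_zero.2 (hy i))).const_mul (w i)
  refine (((hasDerivAt_id' y).sub_const c).fun_sub
    (HasDerivAt.fun_sum (u := univ) fun i _ => h i)).congr_deriv ?_
  simp [sub_neg_eq_add]

theorem hasDerivAt_prod_sub_at_root {𝕜 ι : Type*} [NontriviallyNormedField 𝕜] [Fintype ι]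
    [DecidableEq ι] (μ : ι → 𝕜) (j : ι) :
    HasDerivAt (fun y => ∏ v, (y - μ v)) (∏ v ∈ univ.erase j, (μ j - μ v)) (μ j) := by
  have hprod := HasDerivAt.fun_finsetProd (u := univ) (x := μ j) fun v _ =>
    (hasDerivAt_id _).sub_const (μ v)
  simp only [id, smul_eq_mul, mul_one] at hprod
  rwa [sum_eq_single j (fun v _ hv => prod_eq_zero (mem_erase.2 ⟨Ne.symm hv, mem_univ j⟩)
    (sub_self (μ j))) (fun h => absurd (mem_univ j) h)] at hprod

theorem stmt14_general (k : ℕ) (lam : Fin k → ℝ)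
    (a : Fin k → ℂ) (c : ℝ) (μ : Fin (k + 1) → ℝ)
    (hchar : ∀ X : ℂ,
      (X • (1 : Matrix (Fin (k + 1)) (Fin (k + 1)) ℂ) - arrowMatrix k lam a c).det =
        ∏ v : Fin (k + 1), (X - (μ v : ℂ)))
    (j : Fin (k + 1)) (hj : ∀ i : Fin k, μ j ≠ lam i) :
    1 + ∑ i : Fin k, Complex.normSq (a i) / (μ j - lam i) ^ 2 =
      (∏ v ∈ Finset.univ.erase j, (μ j - μ v)) / ∏ i : Fin k, (μ j - lam i) := by
  set w : Fin k → ℝ := fun i => Complex.normSq (a i)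
  have hfactor : (fun y => ∏ v, (y - μ v)) =ᶠ[𝓝 (μ j)]
      fun y => (∏ i, (y - lam i)) * secularFunction lam w c y := by
    filter_upwards [eventually_all.2 fun i => eventually_ne_nhds (hj i)] with y hy
    have hdet := hchar y
    rw [det_smul_one_sub_arrowMatrix lam a c y (by exact_mod_cast hy)] at hdet
    unfold secularFunction
    exact_mod_cast hdet.symm
  have hq : ∏ i, (μ j - lam i) ≠ 0 := prod_ne_zero_iff.2 fun i _ => sub_ne_zero.2 (hj i)
  have hroot : secularFunction lam w c (μ j) = 0 := by
    have hχ : ∏ v, (μ j - μ v) = 0 := prod_eq_zero (mem_univ j) (sub_self _)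
    simpa [hχ, hq] using hfactor.eq_of_nhds.symm
  have hderiv := (hasDerivAt_prod_sub_at_root μ j).unique
    (((DifferentiableAt.hasDerivAt (by fun_prop)).mul
      (hasDerivAt_secularFunction lam w c hj)).congr_of_eventuallyEq hfactor)
  rw [hroot, mul_zero, zero_add] at hderiv
  rw [hderiv, mul_div_cancel_left₀ _ hq]

/-- The squared normalizer `1 + ∑_i |a_i|²/(μ_j − λ_i)²` of the eigenvector of an arrow
Hermitian matrix depends only on the spectra: it equals
`∏_{v≠j}(μ_j − μ_v) / ∏_i(μ_j − λ_i)`. -/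
theorem stmt14 (k : ℕ) (hk : 1 ≤ k) (lam : Fin k → ℝ)
    (hlam : Function.Injective lam) (a : Fin k → ℂ) (c : ℝ) (μ : Fin (k + 1) → ℝ)
    (hchar : ∀ X : ℂ,
      (X • (1 : Matrix (Fin (k + 1)) (Fin (k + 1)) ℂ) - arrowMatrix k lam a c).det =
        ∏ v : Fin (k + 1), (X - (μ v : ℂ)))
    (j : Fin (k + 1)) (hj : ∀ i : Fin k, μ j ≠ lam i) :
    1 + ∑ i : Fin k, Complex.normSq (a i) / (μ j - lam i) ^ 2 =
      (∏ v ∈ Finset.univ.erase j, (μ j - μ v)) / ∏ i : Fin k, (μ j - lam i) :=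
  stmt14_general k lam a c μ hchar j hj
end
end

section
/- Let n ≥ 2 and 1 ≤ k ≤ n−1, and let Λ be an integer Gelfand-Tsetlin pattern of size n (conventions as below). Define x^{(k)}_j, y^{(k)}_j, X^{(k)}_j, Y^{(k)}_j, ε_k, φ_k as follows: x^{(k)}_j(Λ) = −λ^{(k)}_j + λ^{(k−1)}_{j−1} − λ^{(k)}_{j−1} + λ^{(k+1)}_j, y^{(k)}_j(Λ) = λ^{(k)}_j − λ^{(k−1)}_j + λ^{(k)}_{j+1} − λ^{(k+1)}_{j+1}, X^{(k)}_j = ∑_{i=1}^{j} x^{(k)}_i, Y^{(k)}_j = ∑_{i=j}^{k} y^{(k)}_i, ε_k = max{X^{(k)}_1,...,X^{(k)}_k}, φ_k = max{Y^{(k)}_1,...,Y^{(k)}_k}. Suppose ε_k(Λ) > 0, let l = min{j : X^{(k)}_j(Λ) = ε_k(Λ)}, and set Λ′ = Λ + δ^{(k)}_l. Then: (i) ε_k(Λ′) = ε_k(Λ) − 1; (ii) φ_k(Λ′) = φ_k(Λ) + 1 > 0; and (iii) max{j ∈ {1,...,k} : Y^{(k)}_j(Λ′) = φ_k(Λ′)}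 = l, so that removing 1 from the entry λ^{(k)}_l of Λ′ at the lowering-operator position recovers Λ (i.e. f̃_k(ẽ_k(Λ)) = Λ). -/
/-!
Since `y^{(k)}_j = -x^{(k)}_{j+1}`, the partial sums satisfy
`Y^{(k)}_j = X^{(k)}_j - X^{(k)}_{k+1}`, so `φ_k = ε_k - X^{(k)}_{k+1}` and the maximisers of
`Y^{(k)}` and `X^{(k)}` coincide. Raising `λ^{(k)}_l` lowers `x^{(k)}_l` and `x^{(k)}_{l+1}` by one,
hence lowers `X^{(k)}_j` by one at `j = l`, by two beyond `l`, and leaves it alone before `l`.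
As `l` is the first maximiser of `X^{(k)}`, it becomes the unique maximiser, with value `ε_k - 1`,
while `X^{(k)}_{k+1}` drops by two. Positivity of `φ_k` comes from
`x^{(k)}_{k+1} = λ^{(k+1)}_{k+1} - λ^{(k)}_k ≤ 0` (interlacing).
-/

noncomputable section

/-- An integer Gelfand-Tsetlin pattern of size `n`: a triangular array `Λ m i`
(`1 ≤ i ≤ m ≤ n`, out-of-range entries zero) satisfying the interlacing conditions
`λ^{(m)}_i ≥ λ^{(m−1)}_i ≥ λ^{(m)}_{i+1}`. -/
def IsGTPattern (n : ℕ) (Λ : ℕ → ℕ → ℤ) : Prop :=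
  (∀ m i : ℕ, (i = 0 ∨ m < i ∨ n < m) → Λ m i = 0) ∧
  (∀ m i : ℕ, 1 ≤ i → i + 1 ≤ m → m ≤ n →
    Λ (m - 1) i ≤ Λ m i ∧ Λ m (i + 1) ≤ Λ (m - 1) i)

/-- `x^{(k)}_j(Λ) = −λ^{(k)}_j + λ^{(k−1)}_{j−1} − λ^{(k)}_{j−1} + λ^{(k+1)}_j`. -/
def xval (Λ : ℕ → ℕ → ℤ) (k j : ℕ) : ℤ :=
  -Λ k j + Λ (k - 1) (j - 1) - Λ k (j - 1) + Λ (k + 1) j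

/-- `y^{(k)}_j(Λ) = λ^{(k)}_j − λ^{(k−1)}_j + λ^{(k)}_{j+1} − λ^{(k+1)}_{j+1}`. -/
def yval (Λ : ℕ → ℕ → ℤ) (k j : ℕ) : ℤ :=
  Λ k j - Λ (k - 1) j + Λ k (j + 1) - Λ (k + 1) (j + 1)

/-- `X^{(k)}_j(Λ) = ∑_{i=1}^{j} x^{(k)}_i(Λ)`. -/
def Xval (Λ : ℕ → ℕ → ℤ) (k j : ℕ) : ℤ := ∑ i ∈ Finset.Icc 1 j, xval Λ k i

/-- `Y^{(k)}_j(Λ) = ∑_{i=j}^{k} y^{(k)}_i(Λ)`. -/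
def Yval (Λ : ℕ → ℕ → ℤ) (k j : ℕ) : ℤ := ∑ i ∈ Finset.Icc j k, yval Λ k i

/-- `ε_k(Λ) = max{X^{(k)}_1(Λ),...,X^{(k)}_k(Λ)}`. -/
def eps (k : ℕ) (hk : 1 ≤ k) (Λ : ℕ → ℕ → ℤ) : ℤ :=
  (Finset.Icc 1 k).sup' ⟨1, Finset.mem_Icc.mpr ⟨le_rfl, hk⟩⟩ (Xval Λ k)

/-- `φ_k(Λ) = max{Y^{(k)}_1(Λ),...,Y^{(k)}_k(Λ)}`. -/
def phi (k : ℕ) (hk : 1 ≤ k) (Λ : ℕ → ℕ → ℤ) : ℤ :=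
  (Finset.Icc 1 k).sup' ⟨1, Finset.mem_Icc.mpr ⟨le_rfl, hk⟩⟩ (Yval Λ k)

/-- `Λ + δ^{(k)}_l`. -/
def raiseEntry (Λ : ℕ → ℕ → ℤ) (k l : ℕ) : ℕ → ℕ → ℤ :=
  fun m i => if m = k ∧ i = l then Λ k l + 1 else Λ m i

lemma yval_eq_neg_xval_succ (Λ : ℕ → ℕ → ℤ) (k j : ℕ) :
    yval Λ k j = -xval Λ k (j + 1) := by
  simp only [yval, xval, Nat.add_sub_cancel]
  ring

lemma Xval_zero (Λ : ℕ → ℕ → ℤ) (k : ℕ) : Xval Λ k 0 = 0 := rfl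

lemma Xval_succ (Λ : ℕ → ℕ → ℤ) (k j : ℕ) :
    Xval Λ k (j + 1) = Xval Λ k j + xval Λ k (j + 1) :=
  Finset.sum_Icc_succ_top (by omega) _

lemma Yval_eq_Xval_sub (Λ : ℕ → ℕ → ℤ) {k j : ℕ} (hj : j ≤ k) :
    Yval Λ k j = Xval Λ k j - Xval Λ k (k + 1) := by
  have hy : ∀ i, yval Λ k i = Xval Λ k i - Xval Λ k (i + 1) := fun i => by
    rw [yval_eq_neg_xval_succ, Xval_succ]
    ring
  rw [Yval, Finset.sum_congr rfl fun i _ => hy i, ← Finset.Ico_add_one_right_eq_Icc,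
    ← neg_sub, ← Finset.sum_Ico_sub _ (by omega), ← Finset.sum_neg_distrib]
  simp only [neg_sub]

lemma phi_eq_eps_sub (k : ℕ) (hk : 1 ≤ k) (Λ : ℕ → ℕ → ℤ) :
    phi k hk Λ = eps k hk Λ - Xval Λ k (k + 1) := by
  calc phi k hk Λ
      = (Finset.Icc 1 k).sup' _ (fun j => Xval Λ k j - Xval Λ k (k + 1)) :=
        Finset.sup'_congr _ rfl fun j hj => Yval_eq_Xval_sub Λ (Finset.mem_Icc.mp hj).2
    _ = eps k hk Λ - Xval Λ k (k + 1) :=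
        (Finset.apply_sup'_eq_sup'_comp _ (· - _) fun a b => (max_sub_sub_right a b _).symm).symm

lemma xval_succ_self_nonpos {n k : ℕ} {Λ : ℕ → ℕ → ℤ} (hΛ : IsGTPattern n Λ)
    (hk : 1 ≤ k) (hkn : k + 1 ≤ n) : xval Λ k (k + 1) ≤ 0 := by
  have hzero₁ : Λ k (k + 1) = 0 := hΛ.1 k (k + 1) (by omega)
  have hzero₂ : Λ (k - 1) k = 0 := hΛ.1 (k - 1) k (by omega)
  have hinterlace : Λ (k + 1) (k + 1) ≤ Λ k k := (hΛ.2 (k + 1) k hk le_rfl hkn).2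
  simp only [xval, Nat.add_sub_cancel, hzero₁, hzero₂]
  omega

lemma phi_nonneg {n k : ℕ} {Λ : ℕ → ℕ → ℤ} (hΛ : IsGTPattern n Λ)
    (hk : 1 ≤ k) (hkn : k + 1 ≤ n) : 0 ≤ phi k hk Λ := by
  have hXk : Xval Λ k k ≤ eps k hk Λ := Finset.le_sup' _ (Finset.mem_Icc.mpr ⟨hk, le_rfl⟩)
  have := xval_succ_self_nonpos hΛ hk hkn
  rw [phi_eq_eps_sub, Xval_succ]
  omega

section raiseEntry

variable {Λ : ℕ → ℕ → ℤ} {k l : ℕ}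

lemma xval_raiseEntry (hk : 1 ≤ k) (hl : 1 ≤ l) (i : ℕ) :
    xval (raiseEntry Λ k l) k i
      = xval Λ k i - (if i = l then 1 else 0) - (if i = l + 1 then 1 else 0) := by
  have hpred : i - 1 = l ↔ i = l + 1 := by omega
  simp only [xval, raiseEntry, show k - 1 ≠ k by omega, show k + 1 ≠ k by omega, false_and,
    if_false, true_and, hpred]
  split_ifs with hil hsucc hsucc
  · omega
  · subst hil; ring
  · subst hsucc; simp only [Nat.add_sub_cancel]; ring
  · ring

lemma Xval_raiseEntry (hk : 1 ≤ k) (hl : 1 ≤ l) (j : ℕ) :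
    Xval (raiseEntry Λ k l) k j
      = Xval Λ k j - (if l ≤ j then 1 else 0) - (if l + 1 ≤ j then 1 else 0) := by
  induction j with
  | zero =>
    rw [Xval_zero, Xval_zero]
    split_ifs <;> omega
  | succ j ih =>
    rw [Xval_succ, Xval_succ, ih, xval_raiseEntry hk hl]
    split_ifs <;> omega

lemma Xval_raiseEntry_self (hk : 1 ≤ k) (hl : 1 ≤ l) :
    Xval (raiseEntry Λ k l) k l = Xval Λ k l - 1 := by
  rw [Xval_raiseEntry hk hl, if_pos le_rfl, if_neg (by omega)]
  ring

variable (hk : 1 ≤ k) (hl : l ∈ Finset.Icc 1 k) (hattain : Xval Λ k l = eps k hk Λ)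
  (hmin : ∀ j ∈ Finset.Icc 1 k, Xval Λ k j = eps k hk Λ → l ≤ j)
include hl hattain hmin

lemma eps_raiseEntry : eps k hk (raiseEntry Λ k l) = eps k hk Λ - 1 := by
  refine le_antisymm (Finset.sup'_le _ _ fun j hj => ?_) ?_
  · have hle : Xval Λ k j ≤ eps k hk Λ := Finset.le_sup' _ hj
    have hbefore : j < l → Xval Λ k j ≠ eps k hk Λ := fun hjl he => (hmin j hj he).not_gt hjl
    rw [Xval_raiseEntry hk (Finset.mem_Icc.mp hl).1]
    split_ifs <;> omega
  · calc eps k hk Λ - 1 = Xval (raiseEntry Λ k l) k l := by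
          rw [Xval_raiseEntry_self hk (Finset.mem_Icc.mp hl).1, hattain]
      _ ≤ eps k hk (raiseEntry Λ k l) := Finset.le_sup' _ hl

lemma phi_raiseEntry : phi k hk (raiseEntry Λ k l) = phi k hk Λ + 1 := by
  obtain ⟨hl₁, hlk⟩ := Finset.mem_Icc.mp hl
  rw [phi_eq_eps_sub, phi_eq_eps_sub, eps_raiseEntry hk hl hattain hmin, Xval_raiseEntry hk hl₁,
    if_pos (by omega), if_pos (by omega)]
  ring

lemma Yval_raiseEntry_self : Yval (raiseEntry Λ k l) k l = phi k hk (raiseEntry Λ k l) := by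
  rw [Yval_eq_Xval_sub _ (Finset.mem_Icc.mp hl).2, phi_eq_eps_sub,
    Xval_raiseEntry_self hk (Finset.mem_Icc.mp hl).1, hattain, eps_raiseEntry hk hl hattain hmin]

lemma le_of_Yval_raiseEntry_eq_phi {j : ℕ} (hj : j ∈ Finset.Icc 1 k)
    (hmax : Yval (raiseEntry Λ k l) k j = phi k hk (raiseEntry Λ k l)) : j ≤ l := by
  have hle : Xval Λ k j ≤ eps k hk Λ := Finset.le_sup' _ hj
  rw [Yval_eq_Xval_sub _ (Finset.mem_Icc.mp hj).2, phi_eq_eps_sub,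
    eps_raiseEntry hk hl hattain hmin, Xval_raiseEntry hk (Finset.mem_Icc.mp hl).1] at hmax
  split_ifs at hmax <;> omega

end raiseEntry

/-- `Λ - δ^{(k)}_l`. -/
def lowerEntry (Λ : ℕ → ℕ → ℤ) (k l : ℕ) : ℕ → ℕ → ℤ :=
  fun m i => if m = k ∧ i = l then Λ k l - 1 else Λ m i

lemma lowerEntry_raiseEntry (Λ : ℕ → ℕ → ℤ) (k l : ℕ) :
    lowerEntry (raiseEntry Λ k l) k l = Λ := by
  funext m i
  by_cases h : m = k ∧ i = l
  · obtain ⟨rfl, rfl⟩ := h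
    simp [lowerEntry, raiseEntry]
  · simp [lowerEntry, raiseEntry, h]

theorem stmt19_general (n k : ℕ) (hk1 : 1 ≤ k) (hk : k ≤ n - 1)
    (Λ : ℕ → ℕ → ℤ) (hΛ : IsGTPattern n Λ)
    (l : ℕ) (hl : l ∈ Finset.Icc 1 k)
    (hattain : Xval Λ k l = eps k hk1 Λ)
    (hmin : ∀ j ∈ Finset.Icc 1 k, Xval Λ k j = eps k hk1 Λ → l ≤ j) :
    ∀ Λ' : ℕ → ℕ → ℤ,
      Λ' = (fun m i => if m = k ∧ i = l then Λ k l + 1 else Λ m i) →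
      eps k hk1 Λ' = eps k hk1 Λ - 1 ∧
      phi k hk1 Λ' = phi k hk1 Λ + 1 ∧
      0 < phi k hk1 Λ' ∧
      Yval Λ' k l = phi k hk1 Λ' ∧
      (∀ j ∈ Finset.Icc 1 k, Yval Λ' k j = phi k hk1 Λ' → j ≤ l) ∧
      (fun m i => if m = k ∧ i = l then Λ' k l - 1 else Λ' m i) = Λ := by
  rintro Λ' rfl
  have hphi := phi_raiseEntry hk1 hl hattain hmin
  have hphi_nonneg := phi_nonneg hΛ hk1 (by omega)
  exact ⟨eps_raiseEntry hk1 hl hattain hmin, hphi,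
    (by omega : 0 < phi k hk1 (raiseEntry Λ k l)),
    Yval_raiseEntry_self hk1 hl hattain hmin,
    fun j hj => le_of_Yval_raiseEntry_eq_phi hk1 hl hattain hmin hj,
    lowerEntry_raiseEntry Λ k l⟩

/-- Crystal axioms relating `ẽ_k`, `f̃_k`, `ε_k`, `φ_k` on integer Gelfand-Tsetlin
patterns: if `ε_k(Λ) > 0`, `l` is the smallest index in `{1,...,k}` with
`X^{(k)}_l(Λ) = ε_k(Λ)`, and `Λ′ = Λ + δ^{(k)}_l`, then `ε_k(Λ′) = ε_k(Λ) − 1`,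
`φ_k(Λ′) = φ_k(Λ) + 1 > 0`, the largest index in `{1,...,k}` at which `Y^{(k)}(Λ′)`
attains `φ_k(Λ′)` is again `l`, and subtracting `1` at that entry recovers `Λ`
(i.e. `f̃_k(ẽ_k(Λ)) = Λ`). -/
theorem stmt19 (n k : ℕ) (hn : 2 ≤ n) (hk1 : 1 ≤ k) (hk : k ≤ n - 1)
    (Λ : ℕ → ℕ → ℤ) (hΛ : IsGTPattern n Λ)
    (hpos : 0 < eps k hk1 Λ)
    (l : ℕ) (hl : l ∈ Finset.Icc 1 k)
    (hattain : Xval Λ k l = eps k hk1 Λ)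
    (hmin : ∀ j ∈ Finset.Icc 1 k, Xval Λ k j = eps k hk1 Λ → l ≤ j) :
    ∀ Λ' : ℕ → ℕ → ℤ,
      Λ' = (fun m i => if m = k ∧ i = l then Λ k l + 1 else Λ m i) →
      eps k hk1 Λ' = eps k hk1 Λ - 1 ∧
      phi k hk1 Λ' = phi k hk1 Λ + 1 ∧
      0 < phi k hk1 Λ' ∧
      Yval Λ' k l = phi k hk1 Λ' ∧
      (∀ j ∈ Finset.Icc 1 k, Yval Λ' k j = phi k hk1 Λ' → j ≤ l) ∧
      (fun m i => if m = k ∧ i = l then Λ' k l - 1 else Λ' m i) = Λ :=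
  stmt19_general n k hk1 hk Λ hΛ l hl hattain hmin
end
end
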